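/- Let (k_m) and (Q_m) be as in the block-averaging setup (k_m | k_{m+1}, entries in [0,1], each Q_m obtained from Q_{m+1} by block-averaging). Then there exists a symmetric measurable function W : [0,1]^2 -> [0,1] such that W_{Q_m} -> W almost everywhere, and for all m and 1 <= i,j <= k_m, (Q_m)_{ij} = k_m^2 ∫_{(i-1)/k_m}^{i/k_m} ∫_{(j-1)/k_m}^{j/k_m} W(x,y) dx dy. -/

import Mathlib

/-!
Viewed on `[0,1]²` with Lebesgue measure, the step functions `W_{Q_m}` form a martingale for the
filtration generated by the `k_m × k_m` block partitions: block-averaging says exactly that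
`W_{Q_m}` and `W_{Q_{m+1}}` have the same integral over every level-`m` block. Being bounded by
`1`, this martingale converges almost everywhere. Taking `W := limsup_m W_{Q_m}` makes `W`
symmetric, `[0,1]`-valued and measurable everywhere, not only almost everywhere. By dominated
convergence the integral of `W` over a level-`m` block is the common value `Q_m(i,j) / k_m²` of
the integrals of the `W_{Q_n}`, `n ≥ m`.
-/

open MeasureTheory Finset Filter
open scoped Classical Topology

noncomputable def unif01 : Measure ℝ := volume.restrict (Set.Icc 0 1)

/-- The map `φ_K : [0,1) → [K]` sending `[i/K, (i+1)/K)` to `i` (0-based). -/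
noncomputable def blockIdx (K : ℕ) (hK : 0 < K) (x : ℝ) : Fin K :=
  ⟨min (Nat.floor (x * K)) (K - 1), by omega⟩

section BlockIdx

variable {K : ℕ} (hK : 0 < K)

lemma measurable_blockIdx : Measurable (blockIdx K hK) :=
  Measurable.of_discrete.comp (g := fun n : ℕ => (⟨min n (K - 1), by omega⟩ : Fin K))
    (Nat.measurable_floor.comp (measurable_id.mul_const _))

lemma blockIdx_eq_of_mem_Ioo {i : Fin K} {x : ℝ}
    (hx : x ∈ Set.Ioo ((i : ℝ) / K) ((i + 1) / K)) : blockIdx K hK x = i := by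
  have hK' : (0 : ℝ) < K := by exact_mod_cast hK
  obtain ⟨h1, h2⟩ := hx
  rw [div_lt_iff₀ hK'] at h1
  rw [lt_div_iff₀ hK'] at h2
  have hfloor : ⌊x * K⌋₊ = i := by
    rw [Nat.floor_eq_iff ((Nat.cast_nonneg _).trans h1.le)]
    exact ⟨h1.le, h2⟩
  ext
  simp [blockIdx, hfloor]
  omega

lemma mem_Icc_of_blockIdx_eq {i : Fin K} {x : ℝ} (hx : x ∈ Set.Icc (0 : ℝ) 1)
    (hi : blockIdx K hK x = i) : x ∈ Set.Icc ((i : ℝ) / K) ((i + 1) / K) := by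
  have hK' : (0 : ℝ) < K := by exact_mod_cast hK
  have hmin : min ⌊x * K⌋₊ (K - 1) = i := congrArg Fin.val hi
  rw [Set.mem_Icc, div_le_iff₀ hK', le_div_iff₀ hK']
  constructor
  · calc (i : ℝ) ≤ ⌊x * K⌋₊ := by exact_mod_cast hmin ▸ min_le_left _ _
      _ ≤ x * K := Nat.floor_le (by nlinarith [hx.1])
  · rcases le_total ⌊x * K⌋₊ (K - 1) with h | h
    · rw [min_eq_left h] at hmin
      rw [← hmin]
      exact (Nat.lt_floor_add_one _).le
    · rw [min_eq_right h] at hmin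
      have : (i : ℝ) + 1 = K := by rw [← hmin]; push_cast [Nat.cast_sub hK]; ring
      nlinarith [hx.2]

lemma inter_blockIdx_preimage_ae_eq (i : Fin K) :
    (Set.Icc (0 : ℝ) 1 ∩ blockIdx K hK ⁻¹' {i} : Set ℝ) =ᵐ[volume]
      Set.Ioc ((i : ℝ) / K) ((i + 1) / K) := by
  have hsub : Set.Ioo ((i : ℝ) / K) ((i + 1) / K) ⊆ Set.Icc 0 1 ∩ blockIdx K hK ⁻¹' {i} :=
    fun x hx => ⟨Set.Ioo_subset_Icc_self.trans (Set.Icc_subset_Icc (by positivity)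
      (div_le_one_of_le₀ (by exact_mod_cast i.isLt) (by positivity))) hx,
      blockIdx_eq_of_mem_Ioo hK hx⟩
  have hsup : Set.Icc 0 1 ∩ blockIdx K hK ⁻¹' {i} ⊆ Set.Icc ((i : ℝ) / K) ((i + 1) / K) :=
    fun x hx => mem_Icc_of_blockIdx_eq hK hx.1 hx.2
  exact (LE.le.eventuallyLE hsup).trans Ioc_ae_eq_Icc.symm.le |>.antisymm <|
    Ioo_ae_eq_Ioc.symm.le.trans (LE.le.eventuallyLE hsub)

lemma unif01_restrict_blockIdx_preimage (i : Fin K) :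
    unif01.restrict (blockIdx K hK ⁻¹' {i}) =
      volume.restrict (Set.Ioc ((i : ℝ) / K) ((i + 1) / K)) := by
  rw [unif01, Measure.restrict_restrict (measurable_blockIdx hK (measurableSet_singleton i)),
    Set.inter_comm]
  exact Measure.restrict_congr_set (inter_blockIdx_preimage_ae_eq hK i)

def blockCoarsen {L : ℕ} (hKL : K ∣ L) (a : Fin L) : Fin K :=
  ⟨a / (L / K), Nat.div_lt_of_lt_mul (by rw [Nat.div_mul_cancel hKL]; exact a.isLt)⟩

lemma blockCoarsen_blockIdx {L : ℕ} (hL : 0 < L) (hKL : K ∣ L) (x : ℝ) :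
    blockCoarsen hKL (blockIdx L hL x) = blockIdx K hK x := by
  obtain ⟨r, rfl⟩ := hKL
  have hr : 0 < r := Nat.pos_of_mul_pos_left hL
  have hfloor : ⌊x * K⌋₊ = ⌊x * (K * r : ℕ)⌋₊ / r := by
    rw [← Nat.floor_div_natCast]
    congr 1
    push_cast
    field_simp
  have hlast : (K * r - 1) / r = K - 1 :=
    Nat.div_eq_of_lt_le (by rw [Nat.sub_mul]; omega) (by rw [Nat.sub_add_cancel hK]; omega)
  ext
  simp only [blockCoarsen, blockIdx, Nat.mul_div_cancel_left _ hK, hfloor, ← hlast]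
  exact Monotone.map_min (f := (· / r)) fun _ _ h => Nat.div_le_div_right h

end BlockIdx

section Fibers

variable {Ω α : Type*} [MeasurableSpace Ω] {μ : Measure Ω} [MeasurableSpace α]
  [MeasurableSingletonClass α] {b : Ω → α}

lemma setIntegral_preimage_eq_sum (hb : Measurable b) {F : Ω → ℝ} (hF : Integrable F μ)
    (t : Finset α) : ∫ p in b ⁻¹' t, F p ∂μ = ∑ a ∈ t, ∫ p in b ⁻¹' {a}, F p ∂μ := by
  rw [← integral_biUnion_finset t (fun a _ => hb (measurableSet_singleton a))
    (fun a _ a' _ hne => Disjoint.preimage _ (by simpa using hne)) fun a _ => hF.integrableOn]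
  congr
  ext
  simp

lemma setIntegral_eq_of_forall_setIntegral_preimage_singleton_eq [Finite α] (hb : Measurable b)
    {F G : Ω → ℝ} (hF : Integrable F μ) (hG : Integrable G μ)
    (h : ∀ a, ∫ p in b ⁻¹' {a}, F p ∂μ = ∫ p in b ⁻¹' {a}, G p ∂μ) {s : Set Ω}
    (hs : MeasurableSet[MeasurableSpace.comap b inferInstance] s) :
    ∫ p in s, F p ∂μ = ∫ p in s, G p ∂μ := by
  obtain ⟨t, -, rfl⟩ := hs
  have ht : t = ↑(Set.toFinite t).toFinset := by simp
  rw [ht, setIntegral_preimage_eq_sum hb hF, setIntegral_preimage_eq_sum hb hG]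
  exact Finset.sum_congr rfl fun a _ => h a

lemma setIntegral_preimage_singleton_comp (hb : Measurable b) (G : α → ℝ) (a : α) :
    ∫ p in b ⁻¹' {a}, G (b p) ∂μ = μ.real (b ⁻¹' {a}) * G a := by
  rw [setIntegral_congr_fun (hb (measurableSet_singleton a)) (g := fun _ => G a)
    fun p hp => congrArg G hp, setIntegral_const, smul_eq_mul]

end Fibers

instance : IsProbabilityMeasure unif01 := ⟨by simp [unif01]⟩

noncomputable def blockPair (K : ℕ) (hK : 0 < K) (p : ℝ × ℝ) : Fin K × Fin K :=
  (blockIdx K hK p.1, blockIdx K hK p.2)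

section BlockPair

variable {K : ℕ} (hK : 0 < K)

lemma measurable_blockPair : Measurable (blockPair K hK) :=
  ((measurable_blockIdx hK).comp measurable_fst).prodMk
    ((measurable_blockIdx hK).comp measurable_snd)

lemma restrict_blockPair_preimage (i j : Fin K) :
    (unif01.prod unif01).restrict (blockPair K hK ⁻¹' {(i, j)}) =
      (volume.restrict (Set.Ioc ((i : ℝ) / K) ((i + 1) / K))).prod
        (volume.restrict (Set.Ioc ((j : ℝ) / K) ((j + 1) / K))) := by
  have hprod :
      blockPair K hK ⁻¹' {(i, j)} = (blockIdx K hK ⁻¹' {i}) ×ˢ (blockIdx K hK ⁻¹' {j}) := by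
    ext p
    simp [blockPair]
  rw [hprod, ← Measure.prod_restrict, unif01_restrict_blockIdx_preimage,
    unif01_restrict_blockIdx_preimage]

lemma measureReal_blockPair_preimage (q : Fin K × Fin K) :
    (unif01.prod unif01).real (blockPair K hK ⁻¹' {q}) = 1 / K ^ 2 := by
  rw [← measureReal_restrict_apply_univ, restrict_blockPair_preimage hK q.1 q.2,
    ← Set.univ_prod_univ, measureReal_prod_prod]
  have hside : ∀ i : Fin K, ((i : ℝ) + 1) / K - i / K = 1 / K := fun i => by ring
  simp only [measureReal_restrict_apply_univ, Real.volume_real_Ioc, hside,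
    max_eq_left (show (0 : ℝ) ≤ 1 / K by positivity)]
  ring

lemma setIntegral_blockPair_preimage {F : ℝ → ℝ → ℝ}
    (hF : Integrable (Function.uncurry F) (unif01.prod unif01)) (i j : Fin K) :
    ∫ p in blockPair K hK ⁻¹' {(i, j)}, Function.uncurry F p ∂(unif01.prod unif01) =
      ∫ x in Set.Ioc ((i : ℝ) / K) ((i + 1) / K), ∫ y in Set.Ioc ((j : ℝ) / K) ((j + 1) / K),
        F x y := by
  have hF' := hF.integrableOn (s := blockPair K hK ⁻¹' {(i, j)})
  rw [IntegrableOn, restrict_blockPair_preimage] at hF'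
  rw [restrict_blockPair_preimage]
  exact integral_prod _ hF'

lemma blockPair_eq_coarsen_comp {L : ℕ} (hL : 0 < L) (hKL : K ∣ L) :
    blockPair K hK = Prod.map (blockCoarsen hKL) (blockCoarsen hKL) ∘ blockPair L hL := by
  funext p
  simp [blockPair, blockCoarsen_blockIdx hK hL hKL]

lemma comap_blockPair_le {L : ℕ} (hL : 0 < L) (hKL : K ∣ L) :
    MeasurableSpace.comap (blockPair K hK) inferInstance ≤
      MeasurableSpace.comap (blockPair L hL) inferInstance := by
  rw [blockPair_eq_coarsen_comp hK hL hKL, ← MeasurableSpace.comap_comp]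
  exact MeasurableSpace.comap_mono Measurable.of_discrete.comap_le

end BlockPair

lemma limsup_mem_Icc {u : ℕ → ℝ} {a b : ℝ} (hu : ∀ n, u n ∈ Set.Icc a b) :
    limsup u atTop ∈ Set.Icc a b :=
  ⟨le_limsup_of_frequently_le (Frequently.of_forall fun n => (hu n).1)
      (isBoundedUnder_of ⟨b, fun n => (hu n).2⟩),
    limsup_le_of_le (isCoboundedUnder_le_of_le atTop fun n => (hu n).1)
      (Eventually.of_forall fun n => (hu n).2)⟩

def IsBlockAveraging (k : ℕ → ℕ) (Q : ∀ m, Fin (k m) → Fin (k m) → ℝ) : Prop :=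
  ∀ m (i j : Fin (k m)),
    ((k (m + 1) / k m : ℕ) : ℝ) ^ 2 * Q m i j =
      ∑ a : Fin (k (m + 1)), ∑ b : Fin (k (m + 1)),
        if a.val / (k (m + 1) / k m) = i.val ∧ b.val / (k (m + 1) / k m) = j.val
        then Q (m + 1) a b else 0

section StepGraphon

variable (k : ℕ → ℕ) (hk : ∀ m, 0 < k m)

/-- The step function `W_{Q_m}` on `ℝ × ℝ`. -/
noncomputable def stepGraphon (Q : ∀ m, Fin (k m) → Fin (k m) → ℝ) (m : ℕ) (p : ℝ × ℝ) : ℝ :=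
  Q m (blockIdx (k m) (hk m) p.1) (blockIdx (k m) (hk m) p.2)

noncomputable def blockFiltration (hdvd : ∀ m, k m ∣ k (m + 1)) :
    Filtration ℕ (inferInstance : MeasurableSpace (ℝ × ℝ)) where
  seq m := MeasurableSpace.comap (blockPair (k m) (hk m)) inferInstance
  mono' := monotone_nat_of_le_succ fun m => comap_blockPair_le (hk m) (hk (m + 1)) (hdvd m)
  le' m := (measurable_blockPair (hk m)).comap_le

variable {k hk} (Q : ∀ m, Fin (k m) → Fin (k m) → ℝ)

lemma stepGraphon_eq_comp (m : ℕ) :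
    stepGraphon k hk Q m = (fun q => Q m q.1 q.2) ∘ blockPair (k m) (hk m) := rfl

lemma measurable_stepGraphon (m : ℕ) : Measurable (stepGraphon k hk Q m) :=
  stepGraphon_eq_comp Q m ▸ Measurable.of_discrete.comp (measurable_blockPair (hk m))

lemma integrable_stepGraphon (m : ℕ) :
    Integrable (stepGraphon k hk Q m) (unif01.prod unif01) :=
  stepGraphon_eq_comp Q m ▸ Integrable.of_finite.comp_measurable (measurable_blockPair (hk m))

lemma setIntegral_stepGraphon (m : ℕ) (q : Fin (k m) × Fin (k m)) :
    ∫ p in blockPair (k m) (hk m) ⁻¹' {q}, stepGraphon k hk Q m p ∂(unif01.prod unif01) =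
      Q m q.1 q.2 / k m ^ 2 := by
  refine (setIntegral_preimage_singleton_comp (measurable_blockPair (hk m))
    (fun q => Q m q.1 q.2) q).trans ?_
  rw [measureReal_blockPair_preimage]
  ring

lemma setIntegral_stepGraphon_succ (hdvd : ∀ m, k m ∣ k (m + 1))
    (havg : IsBlockAveraging k Q) (m : ℕ) (q : Fin (k m) × Fin (k m)) :
    ∫ p in blockPair (k m) (hk m) ⁻¹' {q}, stepGraphon k hk Q (m + 1) p ∂(unif01.prod unif01) =
      Q m q.1 q.2 / k m ^ 2 := by
  set c := Prod.map (blockCoarsen (hdvd m)) (blockCoarsen (hdvd m))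
  have hfiber : blockPair (k m) (hk m) ⁻¹' {q} =
      blockPair (k (m + 1)) (hk (m + 1)) ⁻¹' ↑(Finset.univ.filter fun a => c a = q) := by
    rw [blockPair_eq_coarsen_comp (hk m) (hk (m + 1)) (hdvd m)]
    ext p
    simp [c]
  have hsum : ∑ a ∈ Finset.univ.filter (fun a => c a = q), Q (m + 1) a.1 a.2 =
      ((k (m + 1) / k m : ℕ) : ℝ) ^ 2 * Q m q.1 q.2 := by
    rw [havg, Finset.sum_filter, Fintype.sum_prod_type]
    simp [c, blockCoarsen, Prod.ext_iff, Fin.ext_iff]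
  have hk_succ : (k (m + 1) : ℝ) = k m * (k (m + 1) / k m : ℕ) := by
    exact_mod_cast (Nat.mul_div_cancel' (hdvd m)).symm
  have hk0 : (k m : ℝ) ≠ 0 := by exact_mod_cast (hk m).ne'
  have hr0 : ((k (m + 1) / k m : ℕ) : ℝ) ≠ 0 := by
    exact_mod_cast (Nat.div_pos (Nat.le_of_dvd (hk (m + 1)) (hdvd m)) (hk m)).ne'
  rw [hfiber, setIntegral_preimage_eq_sum (measurable_blockPair _) (integrable_stepGraphon Q _)]
  simp_rw [setIntegral_stepGraphon, ← Finset.sum_div, hsum, hk_succ]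
  field_simp

lemma martingale_stepGraphon (hdvd : ∀ m, k m ∣ k (m + 1)) (havg : IsBlockAveraging k Q) :
    Martingale (stepGraphon k hk Q) (blockFiltration k hk hdvd) (unif01.prod unif01) := by
  refine martingale_of_setIntegral_eq_succ (fun m => ?_) (integrable_stepGraphon Q)
    fun m s hs => ?_
  · exact (stepGraphon_eq_comp Q m ▸ Measurable.of_discrete.comp
      (Measurable.of_comap_le le_rfl)).stronglyMeasurable
  · refine setIntegral_eq_of_forall_setIntegral_preimage_singleton_eq
      (measurable_blockPair (hk m)) (integrable_stepGraphon Q m)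
      (integrable_stepGraphon Q (m + 1)) (fun q => ?_) hs
    rw [setIntegral_stepGraphon, setIntegral_stepGraphon_succ Q hdvd havg]

lemma norm_stepGraphon_le (hQmem : ∀ m i j, Q m i j ∈ Set.Icc (0 : ℝ) 1) (m : ℕ)
    (p : ℝ × ℝ) : ‖stepGraphon k hk Q m p‖ ≤ 1 := by
  obtain ⟨h0, h1⟩ := hQmem m (blockIdx (k m) (hk m) p.1) (blockIdx (k m) (hk m) p.2)
  rwa [stepGraphon, Real.norm_of_nonneg h0]

lemma ae_tendsto_limsup_stepGraphon (hdvd : ∀ m, k m ∣ k (m + 1)) (havg : IsBlockAveraging k Q)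
    (hQmem : ∀ m i j, Q m i j ∈ Set.Icc (0 : ℝ) 1) :
    ∀ᵐ p ∂(unif01.prod unif01), Tendsto (fun m => stepGraphon k hk Q m p) atTop
      (𝓝 (limsup (fun m => stepGraphon k hk Q m p) atTop)) := by
  have hbdd (m : ℕ) : eLpNorm (stepGraphon k hk Q m) 1 (unif01.prod unif01) ≤ 1 :=
    (eLpNorm_le_of_ae_bound (ae_of_all _ (norm_stepGraphon_le Q hQmem m))).trans (by simp)
  filter_upwards [(martingale_stepGraphon Q hdvd havg).submartingale.exists_ae_tendsto_of_bdd
    hbdd] with p ⟨c, hc⟩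
  rwa [hc.limsup_eq]

lemma setIntegral_eq_of_ae_tendsto_stepGraphon (hdvd : ∀ m, k m ∣ k (m + 1))
    (havg : IsBlockAveraging k Q) (hQmem : ∀ m i j, Q m i j ∈ Set.Icc (0 : ℝ) 1)
    {W : ℝ × ℝ → ℝ}
    (hW : ∀ᵐ p ∂(unif01.prod unif01), Tendsto (fun m => stepGraphon k hk Q m p) atTop (𝓝 (W p)))
    (m : ℕ) (q : Fin (k m) × Fin (k m)) :
    ∫ p in blockPair (k m) (hk m) ⁻¹' {q}, W p ∂(unif01.prod unif01) =
      Q m q.1 q.2 / k m ^ 2 := by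
  have hlim := tendsto_integral_of_dominated_convergence
    (μ := (unif01.prod unif01).restrict (blockPair (k m) (hk m) ⁻¹' {q}))
    (fun _ => 1) (fun n => (measurable_stepGraphon Q n).aestronglyMeasurable)
    (integrable_const 1) (fun n => ae_of_all _ (norm_stepGraphon_le Q hQmem n))
    (ae_restrict_of_ae hW)
  have hconst : ∀ᶠ n in atTop,
      ∫ p in blockPair (k m) (hk m) ⁻¹' {q}, stepGraphon k hk Q n p ∂(unif01.prod unif01) =
        Q m q.1 q.2 / k m ^ 2 := by
    filter_upwards [eventually_ge_atTop m] with n hn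
    rw [← (martingale_stepGraphon Q hdvd havg).setIntegral_eq hn
      ⟨{q}, measurableSet_singleton q, rfl⟩, setIntegral_stepGraphon]
  exact tendsto_nhds_unique hlim (tendsto_const_nhds.congr' (hconst.mono fun _ h => h.symm))

end StepGraphon

/-- Limit of block-averaged step functions: there is a symmetric measurable
`W : [0,1]² → [0,1]` such that the step functions `W_{Q_m}` converge to `W` almost
everywhere, and each entry of `Q_m` is the average of `W` over the corresponding
square of side `1/k_m`. -/
theorem exists_limit_graphon_of_blockAveraging (k : ℕ → ℕ) (hk : ∀ m, 0 < k m)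
    (hdvd : ∀ m, k m ∣ k (m + 1))
    (Q : ∀ m, Fin (k m) → Fin (k m) → ℝ)
    (hQsymm : ∀ m i j, Q m i j = Q m j i)
    (hQmem : ∀ m i j, Q m i j ∈ Set.Icc (0 : ℝ) 1)
    (havg : ∀ m (i j : Fin (k m)),
      ((k (m + 1) / k m : ℕ) : ℝ) ^ 2 * Q m i j =
        ∑ a : Fin (k (m + 1)), ∑ b : Fin (k (m + 1)),
          if a.val / (k (m + 1) / k m) = i.val ∧ b.val / (k (m + 1) / k m) = j.val
          then Q (m + 1) a b else 0) :
    ∃ W : ℝ → ℝ → ℝ,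
      Measurable (Function.uncurry W) ∧
      (∀ x y, W x y = W y x) ∧
      (∀ x y, W x y ∈ Set.Icc (0 : ℝ) 1) ∧
      (∀ᵐ p ∂(unif01.prod unif01),
        Tendsto (fun m => Q m (blockIdx (k m) (hk m) p.1) (blockIdx (k m) (hk m) p.2))
          atTop (𝓝 (W p.1 p.2))) ∧
      (∀ m (i j : Fin (k m)),
        Q m i j = (k m : ℝ) ^ 2 *
          ∫ x in Set.Ioc ((i : ℝ) / (k m : ℝ)) (((i : ℝ) + 1) / (k m : ℝ)),
            ∫ y in Set.Ioc ((j : ℝ) / (k m : ℝ)) (((j : ℝ) + 1) / (k m : ℝ)),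
              W x y) := by
  set W : ℝ → ℝ → ℝ := fun x y => limsup (fun m => stepGraphon k hk Q m (x, y)) atTop
  have hW_meas : Measurable (Function.uncurry W) := Measurable.limsup (measurable_stepGraphon Q)
  have hW_mem (x y : ℝ) : W x y ∈ Set.Icc (0 : ℝ) 1 := limsup_mem_Icc fun m => hQmem m _ _
  have hconv := ae_tendsto_limsup_stepGraphon (hk := hk) Q hdvd havg hQmem
  refine ⟨W, hW_meas, fun x y => ?_, hW_mem, hconv, fun m i j => ?_⟩
  · simp only [W, stepGraphon, hQsymm _ (blockIdx _ _ x)]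
  · have hW_int : Integrable (Function.uncurry W) (unif01.prod unif01) :=
      .of_bound hW_meas.aestronglyMeasurable 1 (ae_of_all _ fun p =>
        (Real.norm_of_nonneg (hW_mem p.1 p.2).1).trans_le (hW_mem p.1 p.2).2)
    have hk0 : (k m : ℝ) ≠ 0 := by exact_mod_cast (hk m).ne'
    rw [← setIntegral_blockPair_preimage (hk m) hW_int,
      setIntegral_eq_of_ae_tendsto_stepGraphon Q hdvd havg hQmem (W := Function.uncurry W) hconv
        m (i, j)]
    field_simp
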